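/- arXiv:2202.07610 — 6 statements merged into one kernel-verified Lean document; each statement's English description precedes it below -/
import Mathlib

section
/- Let ρ be a normalised, monotone, star-shaped functional on L ⊂ L^1 and Y ⊂ L a subset. Then ρ satisfies weak sensitivity to large losses on Y (for each X ∈ Y with ℙ[X<0]>0 and E[X]=0 there exists λ > 0 with ρ(λX) > 0) if and only if ρ^∞ does, where ρ^∞(X) = lim_{t→∞} ρ(tX)/t. -/
open Filter MeasureTheory

/-- `ρ` satisfies weak sensitivity to large losses on `Y ⊆ L` if and only if
its recession functional `ρ^∞` does. -/
theorem stmt3 {Ω : Type*} [MeasurableSpace Ω] (μ : Measure Ω) [IsProbabilityMeasure μ]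
    (L : Submodule ℝ (Ω → ℝ)) (Y : Set (Ω → ℝ)) (hYL : Y ⊆ L)
    (hL1 : ∀ X ∈ L, Integrable X μ)
    (ρ : (Ω → ℝ) → EReal) (hbot : ∀ X, ρ X ≠ ⊥)
    (hnorm : ρ 0 = 0)
    (hmono : ∀ X ∈ L, ∀ X' ∈ L, (∀ᵐ ω ∂μ, X ω ≤ X' ω) → ρ X' ≤ ρ X)
    (hstar : ∀ X ∈ L, ∀ l : ℝ, 1 ≤ l → (l : EReal) * ρ X ≤ ρ (l • X))
    (ρinf : (Ω → ℝ) → EReal)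
    (hlim : ∀ X ∈ L, Tendsto (fun t : ℝ => ρ (t • X) * ((t⁻¹ : ℝ) : EReal)) atTop
      (nhds (ρinf X))) :
    (∀ X ∈ Y, 0 < μ {ω | X ω < 0} → (∫ ω, X ω ∂μ) = 0 →
        ∃ l : ℝ, 0 < l ∧ 0 < ρ (l • X)) ↔
      (∀ X ∈ Y, 0 < μ {ω | X ω < 0} → (∫ ω, X ω ∂μ) = 0 →
        ∃ l : ℝ, 0 < l ∧ 0 < ρinf (l • X)) := by
  constructor
  · -- ρ sensitive → ρinf sensitive, using ρ Z ≤ ρinf Z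
    intro h X hXY hneg hint
    obtain ⟨l, hl, hlρ⟩ := h X hXY hneg hint
    refine ⟨l, hl, lt_of_lt_of_le hlρ ?_⟩
    have hZ : l • X ∈ L := L.smul_mem l (hYL hXY)
    refine ge_of_tendsto (hlim _ hZ) ?_
    filter_upwards [eventually_ge_atTop (1 : ℝ)] with t ht
    have h1 : (t : EReal) * ρ (l • X) ≤ ρ (t • l • X) := hstar _ hZ t ht
    have ht0 : (0 : ℝ) < t := lt_of_lt_of_le one_pos ht
    have h2 : ((t : EReal) * ρ (l • X)) * ((t⁻¹ : ℝ) : EReal) = ρ (l • X) := by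
      rw [mul_comm ((t : EReal)) (ρ (l • X)), mul_assoc, ← EReal.coe_mul,
        mul_inv_cancel₀ (ne_of_gt ht0)]
      simp
    calc ρ (l • X) = ((t : EReal) * ρ (l • X)) * ((t⁻¹ : ℝ) : EReal) := h2.symm
      _ ≤ ρ (t • l • X) * ((t⁻¹ : ℝ) : EReal) := by
          apply mul_le_mul_of_nonneg_right h1
          exact_mod_cast le_of_lt (inv_pos.mpr ht0)
  · -- ρinf sensitive → ρ sensitive
    intro h X hXY hneg hint
    obtain ⟨l, hl, hlρ⟩ := h X hXY hneg hint
    have hZ : l • X ∈ L := L.smul_mem l (hYL hXY)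
    have hev : ∀ᶠ t : ℝ in atTop, 0 < ρ (t • l • X) * ((t⁻¹ : ℝ) : EReal) :=
      (hlim _ hZ).eventually_const_lt hlρ
    obtain ⟨t, ht1, htpos⟩ := (hev.and (eventually_ge_atTop (1 : ℝ))).exists
    have ht0 : (0 : ℝ) < t := lt_of_lt_of_le one_pos htpos
    refine ⟨t * l, mul_pos ht0 hl, ?_⟩
    rw [mul_smul]
    by_contra hle
    push_neg at hle
    have : ρ (t • l • X) * ((t⁻¹ : ℝ) : EReal) ≤ 0 :=
      mul_nonpos_of_nonpos_of_nonneg hle (by exact_mod_cast le_of_lt (inv_pos.mpr ht0))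
    exact absurd ht1 (not_lt.mpr this)
end

section
/- Let ρ be a normalised, monotone, star-shaped functional on L ⊂ L^1. Then ρ satisfies strong sensitivity to large losses on all of L (for each X ∈ L with ℙ[X<0]>0 there exists λ > 0 with ρ(λX) > 0) if and only if the acceptance set of ρ^∞ equals the nonnegative cone, i.e., {X ∈ L : ρ^∞(X) ≤ 0} = {X ∈ L : X ≥ 0 a.s.}. -/
open Filter MeasureTheory

lemma ereal_mul_nonpos {a b : EReal} (ha : a ≤ 0) (hb : 0 ≤ b) : a * b ≤ 0 :=
  mul_nonpos_of_nonpos_of_nonneg ha hb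

/-- `ρ` satisfies strong sensitivity to large losses on all of `L` if and only if
the acceptance set of the recession functional `ρ^∞` equals the nonnegative cone of `L`. -/
theorem stmt4 {Ω : Type*} [MeasurableSpace Ω] (μ : Measure Ω) [IsProbabilityMeasure μ]
    (L : Submodule ℝ (Ω → ℝ))
    (hL1 : ∀ X ∈ L, Integrable X μ)
    (ρ : (Ω → ℝ) → EReal) (hbot : ∀ X, ρ X ≠ ⊥)
    (hnorm : ρ 0 = 0)
    (hmono : ∀ X ∈ L, ∀ X' ∈ L, (∀ᵐ ω ∂μ, X ω ≤ X' ω) → ρ X' ≤ ρ X)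
    (hstar : ∀ X ∈ L, ∀ l : ℝ, 1 ≤ l → (l : EReal) * ρ X ≤ ρ (l • X))
    (ρinf : (Ω → ℝ) → EReal)
    (hlim : ∀ X ∈ L, Tendsto (fun t : ℝ => ρ (t • X) * ((t⁻¹ : ℝ) : EReal)) atTop
      (nhds (ρinf X))) :
    (∀ X ∈ L, 0 < μ {ω | X ω < 0} → ∃ l : ℝ, 0 < l ∧ 0 < ρ (l • X)) ↔
      {X : Ω → ℝ | X ∈ L ∧ ρinf X ≤ 0} = {X : Ω → ℝ | X ∈ L ∧ ∀ᵐ ω ∂μ, 0 ≤ X ω} := by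
  constructor
  · intro hsens
    ext X
    simp only [Set.mem_setOf_eq]
    constructor
    · rintro ⟨hXL, hX0⟩
      refine ⟨hXL, ?_⟩
      by_contra hneg
      have hpos : 0 < μ {ω | X ω < 0} := by
        rw [pos_iff_ne_zero]
        intro h0
        apply hneg
        rw [ae_iff]
        simpa [not_le] using h0
      obtain ⟨l, hl, hρl⟩ := hsens X hXL hpos
      -- show ρinf X ≥ ρ(lX) * l⁻¹ > 0, contradiction
      have hlb : ρ (l • X) * ((l⁻¹ : ℝ) : EReal) ≤ ρinf X := by
        refine ge_of_tendsto (hlim X hXL) ?_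
        filter_upwards [eventually_ge_atTop (max l 1)] with t ht
        have htl : l ≤ t := le_trans (le_max_left _ _) ht
        have ht1 : (1:ℝ) ≤ t := le_trans (le_max_right _ _) ht
        have htpos : (0:ℝ) < t := lt_of_lt_of_le one_pos ht1
        have hstep : ((t / l : ℝ) : EReal) * ρ (l • X) ≤ ρ (t • X) := by
          have h1 : (1:ℝ) ≤ t / l := (one_le_div hl).mpr htl
          have := hstar (l • X) (L.smul_mem l hXL) (t / l) h1
          rwa [smul_smul, div_mul_cancel₀ _ (ne_of_gt hl)] at this
        calc ρ (l • X) * ((l⁻¹ : ℝ) : EReal)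
            = ((t / l : ℝ) : EReal) * ρ (l • X) * ((t⁻¹ : ℝ) : EReal) := by
              rw [mul_comm ((t / l : ℝ) : EReal) _, mul_assoc, ← EReal.coe_mul]
              congr 2
              field_simp
          _ ≤ ρ (t • X) * ((t⁻¹ : ℝ) : EReal) := by
              apply mul_le_mul_of_nonneg_right hstep
              exact_mod_cast le_of_lt (inv_pos.mpr htpos)
      have : (0 : EReal) < ρ (l • X) * ((l⁻¹ : ℝ) : EReal) := by
        apply EReal.mul_pos hρl
        exact_mod_cast inv_pos.mpr hl
      exact absurd (lt_of_lt_of_le this (le_trans hlb hX0)) (lt_irrefl 0)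
    · rintro ⟨hXL, hX0⟩
      refine ⟨hXL, ?_⟩
      refine le_of_tendsto (hlim X hXL) ?_
      filter_upwards [eventually_ge_atTop (1:ℝ)] with t ht
      have htpos : (0:ℝ) < t := lt_of_lt_of_le one_pos ht
      have h1 : ρ (t • X) ≤ 0 := by
        rw [← hnorm]
        refine hmono 0 L.zero_mem (t • X) (L.smul_mem t hXL) ?_
        filter_upwards [hX0] with ω hω
        simpa using mul_nonneg (le_of_lt htpos) hω
      exact ereal_mul_nonpos h1 (by exact_mod_cast le_of_lt (inv_pos.mpr htpos))
  · intro heq X hXL hpos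
    have hnot : ¬ (∀ᵐ ω ∂μ, 0 ≤ X ω) := by
      intro h
      have : μ {ω | X ω < 0} = 0 := by
        rw [ae_iff] at h
        simpa [not_le] using h
      exact absurd this (ne_of_gt hpos)
    have hXnot : X ∉ {X : Ω → ℝ | X ∈ L ∧ ρinf X ≤ 0} := by
      rw [heq]; exact fun h => hnot h.2
    have hρinf : 0 < ρinf X := by
      by_contra h
      exact hXnot ⟨hXL, not_lt.mp h⟩
    have hev := (hlim X hXL).eventually_const_lt hρinf
    obtain ⟨t, hgt, ht1⟩ := (hev.and (eventually_ge_atTop (1:ℝ))).exists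
    have htpos : (0:ℝ) < t := lt_of_lt_of_le one_pos ht1
    refine ⟨t, htpos, ?_⟩
    by_contra h
    exact absurd hgt (not_lt.mpr (ereal_mul_nonpos (not_lt.mp h)
      (by exact_mod_cast le_of_lt (inv_pos.mpr htpos))))
end

section
/- Let l : ℝ → ℝ be a loss function (nondecreasing, convex, l(0)=0, l(x) ≥ x for all x) with lim_{x→∞} l(x)/x = ∞. Then the expected weighted loss EW^l(X) := E[l(-X)] is strongly sensitive to large losses on the Orlicz heart H^{Φ_l}: for every X ∈ H^{Φ_l} with ℙ[X < 0] > 0 there exists λ ≥ 1 such that E[l(-λX)] > 0. -/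
open Filter MeasureTheory

/-!
On the event `A = {X ≤ -k}`, which has positive probability `p` for some `k > 0`, the loss
`l(-λX)` is at least `l(λk)`, while everywhere it is at least `-λ|X|` because `l(x) ≥ x`. Hence
`E[l(-λX)] ≥ p · l(λk) - λ E|X|`, and superlinearity of `l` makes `p · l(λk)` beat the linear
term `λ E|X|` for large `λ`.
-/

section

variable {Ω : Type*} [MeasurableSpace Ω] {μ : Measure Ω} {X : Ω → ℝ}

lemma exists_pos_measure_le_neg (h : 0 < μ {ω | X ω < 0}) : ∃ k > 0, 0 < μ {ω | X ω ≤ -k} := by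
  have hunion : {ω | X ω < 0} = ⋃ n : ℕ, {ω | X ω ≤ -(1 / ((n : ℝ) + 1))} := by
    ext ω
    simp only [Set.mem_ofPred_eq, Set.mem_iUnion]
    constructor
    · intro hω
      obtain ⟨n, hn⟩ := exists_nat_one_div_lt (neg_pos.mpr hω)
      exact ⟨n, by linarith⟩
    · rintro ⟨n, hn⟩
      linarith [Nat.one_div_pos_of_nat (α := ℝ) (n := n)]
  rw [hunion] at h
  obtain ⟨n, hn⟩ := exists_measure_pos_of_not_measure_iUnion_null h.ne'
  exact ⟨_, Nat.one_div_pos_of_nat, hn⟩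

variable {l : ℝ → ℝ}

lemma integrable_of_integrable_comp_abs (hge : ∀ x, x ≤ l x) (hX : AEStronglyMeasurable X μ)
    (h : Integrable (fun ω => l |X ω|) μ) : Integrable X μ :=
  h.mono hX <| ae_of_all _ fun ω => by
    simpa only [Real.norm_eq_abs] using (hge _).trans (le_abs_self _)

lemma integrable_comp_neg_mul (hmono : Monotone l) (hge : ∀ x, x ≤ l x) {a : ℝ} (ha : 0 ≤ a)
    (hX : Integrable X μ) (h : Integrable (fun ω => l (a * |X ω|)) μ) :
    Integrable (fun ω => l (-(a * X ω))) μ :=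
  integrable_of_le_of_le
    (hmono.measurable.comp_aemeasurable (hX.aemeasurable.const_mul a).neg).aestronglyMeasurable
    (ae_of_all _ fun ω => hge _)
    (ae_of_all _ fun ω => hmono <| by nlinarith [neg_abs_le (X ω), le_abs_self (X ω)])
    (hX.const_mul a).neg h

lemma measureReal_mul_sub_le_integral_comp_neg_mul [IsFiniteMeasure μ] (hmono : Monotone l)
    (hge : ∀ x, x ≤ l x) {lam : ℝ} (hlam : 0 ≤ lam) (k : ℝ) (hXm : Measurable X)
    (hX : Integrable X μ) (hf : Integrable (fun ω => l (-(lam * X ω))) μ) :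
    μ.real {ω | X ω ≤ -k} * l (lam * k) - lam * ∫ ω, |X ω| ∂μ ≤ ∫ ω, l (-(lam * X ω)) ∂μ := by
  have hA : MeasurableSet {ω | X ω ≤ -k} := hXm measurableSet_Iic
  have hpointwise : ∀ ω,
      {ω | X ω ≤ -k}.indicator (fun _ => l (lam * k)) ω - lam * |X ω| ≤ l (-(lam * X ω)) := by
    intro ω
    have hlin : -(lam * |X ω|) ≤ l (-(lam * X ω)) :=
      le_trans (by nlinarith [le_abs_self (X ω)]) (hge _)
    by_cases hω : ω ∈ {ω | X ω ≤ -k}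
    · rw [Set.indicator_of_mem hω]
      have : l (lam * k) ≤ l (-(lam * X ω)) := hmono (by nlinarith [show X ω ≤ -k from hω])
      nlinarith [abs_nonneg (X ω)]
    · rw [Set.indicator_of_notMem hω]
      linarith
  have hind := (integrable_const (μ := μ) (l (lam * k))).indicator hA
  calc μ.real {ω | X ω ≤ -k} * l (lam * k) - lam * ∫ ω, |X ω| ∂μ
      = ∫ ω, {ω | X ω ≤ -k}.indicator (fun _ => l (lam * k)) ω - lam * |X ω| ∂μ := by
        rw [integral_sub hind (hX.abs.const_mul lam), integral_indicator_const _ hA,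
          integral_const_mul, smul_eq_mul]
    _ ≤ ∫ ω, l (-(lam * X ω)) ∂μ :=
        integral_mono (hind.sub (hX.abs.const_mul lam)) hf hpointwise

end

lemma exists_mul_lt_comp_mul_of_superlinear {l : ℝ → ℝ}
    (hsuper : Tendsto (fun x => l x / x) atTop atTop) {k : ℝ} (hk : 0 < k) (c : ℝ) :
    ∃ lam : ℝ, 1 ≤ lam ∧ c * lam < l (lam * k) := by
  obtain ⟨lam, hlam1, hlam⟩ := ((eventually_ge_atTop 1).and
    ((hsuper.comp (tendsto_id.atTop_mul_const hk)).eventually_gt_atTop (c / k))).exists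
  have hlamk : 0 < lam * k := by positivity
  refine ⟨lam, hlam1, ?_⟩
  calc c * lam = c / k * (lam * k) := by field_simp
    _ < l (lam * k) := (lt_div_iff₀ hlamk).mp hlam

theorem stmt12_general {Ω : Type*} [MeasurableSpace Ω] (μ : Measure Ω) [IsProbabilityMeasure μ]
    (l : ℝ → ℝ) (hmono : Monotone l)
    (hge : ∀ x : ℝ, x ≤ l x)
    (hsuper : Tendsto (fun x : ℝ => l x / x) atTop atTop)
    (X : Ω → ℝ) (hmeas : Measurable X)
    (hheart : ∀ a : ℝ, 0 < a → Integrable (fun ω => l (a * |X ω|)) μ)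
    (hneg : 0 < μ {ω | X ω < 0}) :
    ∃ lam : ℝ, 1 ≤ lam ∧ 0 < ∫ ω, l (-(lam * X ω)) ∂μ := by
  have hX : Integrable X μ := integrable_of_integrable_comp_abs hge hmeas.aestronglyMeasurable
    (by simpa only [one_mul] using hheart 1 one_pos)
  obtain ⟨k, hk, hA⟩ := exists_pos_measure_le_neg hneg
  set p := μ.real {ω | X ω ≤ -k}
  have hp : 0 < p := ENNReal.toReal_pos hA.ne' (measure_ne_top μ _)
  obtain ⟨lam, hlam1, hlam⟩ :=
    exists_mul_lt_comp_mul_of_superlinear hsuper hk ((∫ ω, |X ω| ∂μ) / p)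
  have hlam0 : 0 < lam := by linarith
  refine ⟨lam, hlam1, ?_⟩
  calc 0 < p * l (lam * k) - lam * ∫ ω, |X ω| ∂μ := by
        rw [div_mul_eq_mul_div, div_lt_iff₀ hp] at hlam
        linarith
    _ ≤ ∫ ω, l (-(lam * X ω)) ∂μ :=
        measureReal_mul_sub_le_integral_comp_neg_mul hmono hge hlam0.le k hmeas hX
          (integrable_comp_neg_mul hmono hge hlam0.le hX (hheart lam hlam0))

/-- for a loss function `l` with `lim_{x→∞} l(x)/x = ∞`, the expected
weighted loss `EW^l(X) = E[l(-X)]` is strongly sensitive to large losses on the Orlicz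
heart `H^{Φ_l}`: every `X ∈ H^{Φ_l}` with `ℙ[X<0] > 0` satisfies `E[l(-λX)] > 0` for
some `λ ≥ 1`. -/
theorem stmt12 {Ω : Type*} [MeasurableSpace Ω] (μ : Measure Ω) [IsProbabilityMeasure μ]
    (l : ℝ → ℝ) (hmono : Monotone l) (hconv : ConvexOn ℝ Set.univ l)
    (h0 : l 0 = 0) (hge : ∀ x : ℝ, x ≤ l x)
    (hsuper : Tendsto (fun x : ℝ => l x / x) atTop atTop)
    (X : Ω → ℝ) (hmeas : Measurable X)
    (hheart : ∀ a : ℝ, 0 < a → Integrable (fun ω => l (a * |X ω|)) μ)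
    (hneg : 0 < μ {ω | X ω < 0}) :
    ∃ lam : ℝ, 1 ≤ lam ∧ 0 < ∫ ω, l (-(lam * X ω)) ∂μ :=
  stmt12_general μ l hmono hge hsuper X hmeas hheart hneg
end

section
/- Let l : ℝ → ℝ be a loss function with lim_{x→-∞} l(x)/x = 0. Then EW^l(X) := E[l(-X)] is strongly sensitive to large losses on H^{Φ_l}: for each X ∈ H^{Φ_l} with ℙ[X < 0] > 0 there exists λ ≥ 1 with E[l(-λX)] > 0. -/
open Filter MeasureTheory

/-!
Set `c := E[X⁻] > 0` and `m := E|X|`. For every `λ ≥ 0` one has the pointwise bound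
`l(-λx) ≥ λ x⁻ + l(-λ) (1 + |x|)`: on `x < 0` this is `l ≥ id`, on `0 ≤ x ≤ 1` monotonicity,
and on `x ≥ 1` the superhomogeneity `x l(-λ) ≤ l(-λx)` of a convex function vanishing at `0`.
Integrating, `E[l(-λX)] ≥ λ (c + (1 + m) l(-λ)/λ)`, and `l(-λ)/λ → 0` makes this positive for
large `λ`.
-/

lemma ConvexOn.mul_le_of_one_le {l : ℝ → ℝ} (hconv : ConvexOn ℝ Set.univ l) (h0 : l 0 = 0)
    {t : ℝ} (ht : 1 ≤ t) (y : ℝ) : t * l y ≤ l (t * y) := by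
  have ht0 : 0 < t := by linarith
  have hcomb := hconv.2 (Set.mem_univ (t * y)) (Set.mem_univ 0) (inv_nonneg.2 ht0.le)
    (sub_nonneg.2 (inv_le_one_of_one_le₀ ht)) (by ring)
  simp only [smul_eq_mul, mul_zero, add_zero, h0, inv_mul_cancel_left₀ ht0.ne'] at hcomb
  calc t * l y ≤ t * (t⁻¹ * l (t * y)) := by gcongr
    _ = l (t * y) := mul_inv_cancel_left₀ ht0.ne' _

lemma eventually_pos_mul_add_of_tendsto_div_atBot {l : ℝ → ℝ}
    (hsub : Tendsto (fun x : ℝ => l x / x) atBot (nhds 0)) {c : ℝ} (hc : 0 < c) (k : ℝ) :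
    ∀ᶠ t in atTop, 0 < t * c + l (-t) * k := by
  have hlim : Tendsto (fun t : ℝ => c - k * (l (-t) / -t)) atTop (nhds c) := by
    simpa using tendsto_const_nhds.sub ((hsub.comp tendsto_neg_atTop_atBot).const_mul k)
  filter_upwards [hlim.eventually (lt_mem_nhds (half_lt_self hc)), eventually_gt_atTop 0]
    with t hct ht
  have : t * c + l (-t) * k = t * (c - k * (l (-t) / -t)) := by field_simp; ring
  rw [this]
  exact mul_pos ht (by linarith)

section Integral

variable {Ω : Type*} [MeasurableSpace Ω] {μ : Measure Ω} {X : Ω → ℝ}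

lemma integral_negPart_pos (hX : Integrable X μ) (hneg : 0 < μ {ω | X ω < 0}) :
    0 < ∫ ω, max (-X ω) 0 ∂μ := by
  refine (integral_pos_iff_support_of_nonneg (fun ω => le_max_right _ _) hX.neg_part).2 ?_
  convert hneg using 2
  ext ω
  simp [Function.mem_support]

section Loss

variable {l : ℝ → ℝ} (hmono : Monotone l) (hconv : ConvexOn ℝ Set.univ l) (h0 : l 0 = 0)
  (hge : ∀ x : ℝ, x ≤ l x)
include hmono hconv h0 hge

lemma le_loss_neg_mul {lam : ℝ} (hlam : 0 ≤ lam) (x : ℝ) :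
    lam * max (-x) 0 + l (-lam) * (1 + |x|) ≤ l (-(lam * x)) := by
  have hl : l (-lam) ≤ 0 := h0 ▸ hmono (neg_nonpos.2 hlam)
  rcases lt_or_ge x 0 with hx | hx
  · rw [max_eq_left (by linarith)]
    nlinarith [hge (-(lam * x)), abs_nonneg x]
  rw [max_eq_right (by linarith), abs_of_nonneg hx, mul_zero, zero_add]
  rcases le_total x 1 with hx1 | hx1
  · nlinarith [hmono (show -lam ≤ -(lam * x) by nlinarith)]
  · have := hconv.mul_le_of_one_le h0 hx1 (-lam)
    rw [mul_neg, mul_comm x lam, mul_comm] at this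
    nlinarith

lemma integrable_loss_neg_mul [IsFiniteMeasure μ] (hX : Integrable X μ) {lam : ℝ} (hlam : 0 ≤ lam)
    (hheart : Integrable (fun ω => l (lam * |X ω|)) μ) :
    Integrable (fun ω => l (-(lam * X ω))) μ := by
  refine integrable_of_le_of_le (g₁ := fun ω => lam * max (-X ω) 0 + l (-lam) * (1 + |X ω|))
    (hmono.measurable.comp_aemeasurable (hX.aemeasurable.const_mul lam).neg).aestronglyMeasurable
    (ae_of_all _ fun ω => le_loss_neg_mul hmono hconv h0 hge hlam (X ω))
    (ae_of_all _ fun ω => hmono ?_) ?_ hheart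
  · nlinarith [neg_abs_le (X ω)]
  · exact (hX.neg_part.const_mul lam).add (((integrable_const 1).add hX.abs).const_mul _)

lemma mul_integral_negPart_add_le_integral_loss [IsProbabilityMeasure μ] (hX : Integrable X μ)
    {lam : ℝ} (hlam : 0 ≤ lam) (hheart : Integrable (fun ω => l (lam * |X ω|)) μ) :
    lam * ∫ ω, max (-X ω) 0 ∂μ + l (-lam) * (1 + ∫ ω, |X ω| ∂μ) ≤
      ∫ ω, l (-(lam * X ω)) ∂μ := by
  have hpart : Integrable (fun ω => lam * max (-X ω) 0) μ := hX.neg_part.const_mul lam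
  have habs : Integrable (fun ω => 1 + |X ω|) μ := (integrable_const 1).add hX.abs
  calc lam * ∫ ω, max (-X ω) 0 ∂μ + l (-lam) * (1 + ∫ ω, |X ω| ∂μ)
      = ∫ ω, lam * max (-X ω) 0 + l (-lam) * (1 + |X ω|) ∂μ := by
        rw [integral_add hpart (habs.const_mul _), integral_const_mul, integral_const_mul,
          integral_add (integrable_const 1) hX.abs]
        simp
    _ ≤ ∫ ω, l (-(lam * X ω)) ∂μ :=
        integral_mono (hpart.add (habs.const_mul _))
          (integrable_loss_neg_mul hmono hconv h0 hge hX hlam hheart)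
          fun ω => le_loss_neg_mul hmono hconv h0 hge hlam (X ω)

end Loss

end Integral

/-- for a loss function `l` with `lim_{x→-∞} l(x)/x = 0`, the expected
weighted loss `EW^l(X) = E[l(-X)]` is strongly sensitive to large losses on the Orlicz
heart `H^{Φ_l}`: every `X ∈ H^{Φ_l}` with `ℙ[X<0] > 0` satisfies `E[l(-λX)] > 0` for
some `λ ≥ 1`. -/
theorem stmt13 {Ω : Type*} [MeasurableSpace Ω] (μ : Measure Ω) [IsProbabilityMeasure μ]
    (l : ℝ → ℝ) (hmono : Monotone l) (hconv : ConvexOn ℝ Set.univ l)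
    (h0 : l 0 = 0) (hge : ∀ x : ℝ, x ≤ l x)
    (hsub : Tendsto (fun x : ℝ => l x / x) atBot (nhds 0))
    (X : Ω → ℝ) (hmeas : Measurable X)
    (hheart : ∀ a : ℝ, 0 < a → Integrable (fun ω => l (a * |X ω|)) μ)
    (hneg : 0 < μ {ω | X ω < 0}) :
    ∃ lam : ℝ, 1 ≤ lam ∧ 0 < ∫ ω, l (-(lam * X ω)) ∂μ := by
  have hX : Integrable X μ := by
    refine Integrable.mono' (by simpa using hheart 1 one_pos) hmeas.aestronglyMeasurable
      (ae_of_all _ fun ω => ?_)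
    simpa using hge |X ω|
  obtain ⟨lam, hlam1, hpos⟩ := ((eventually_ge_atTop 1).and
    (eventually_pos_mul_add_of_tendsto_div_atBot hsub (integral_negPart_pos hX hneg)
      (1 + ∫ ω, |X ω| ∂μ))).exists
  have hlam : 0 < lam := by linarith
  exact ⟨lam, hlam1, hpos.trans_le
    (mul_integral_negPart_add_le_integral_loss hmono hconv h0 hge hX hlam.le (hheart lam hlam))⟩
end

section
/- Let l : ℝ → ℝ be a loss function with β := lim_{x→∞} l(x)/x < ∞ and α := lim_{x→-∞} l(x)/x > 0 (so β ∈ [1,∞) and α ∈ (0,1]). Then there exists a random variable X ∈ L^1 with E[X] > 0, ℙ[X < 0] > 0, and E[l(-λX)] → -∞ as λ → ∞. -/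
open Filter MeasureTheory

/-- for a loss function `l` with `β = lim_{x→∞} l(x)/x < ∞` and
`α = lim_{x→-∞} l(x)/x > 0`, on a nontrivial probability space there is `X ∈ L^1` with
`E[X] > 0`, `ℙ[X<0] > 0`, and `E[l(-λX)] → -∞` as `λ → ∞`. -/
theorem stmt14 {Ω : Type*} [MeasurableSpace Ω] (μ : Measure Ω) [IsProbabilityMeasure μ]
    (hnontriv : ∃ A : Set Ω, MeasurableSet A ∧ 0 < μ A ∧ μ A < 1)
    (l : ℝ → ℝ) (hmono : Monotone l) (hconv : ConvexOn ℝ Set.univ l)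
    (h0 : l 0 = 0) (hge : ∀ x : ℝ, x ≤ l x)
    (α β : ℝ) (hαpos : 0 < α)
    (hα : Tendsto (fun x : ℝ => l x / x) atBot (nhds α))
    (hβ : Tendsto (fun x : ℝ => l x / x) atTop (nhds β)) :
    ∃ X : Ω → ℝ, Integrable X μ ∧ 0 < ∫ ω, X ω ∂μ ∧ 0 < μ {ω | X ω < 0} ∧
      Tendsto (fun lam : ℝ => ∫ ω, l (-(lam * X ω)) ∂μ) atTop atBot := by
  classical
  obtain ⟨A, hA, hA0, hA1⟩ := hnontriv
  set p : ℝ := (μ A).toReal with hpdef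
  have hAne : μ A ≠ ⊤ := (lt_of_lt_of_le hA1 le_top).ne
  have hp0 : 0 < p := ENNReal.toReal_pos hA0.ne' hAne
  have hp1 : p < 1 := by
    have := (ENNReal.toReal_lt_toReal hAne ENNReal.one_ne_top).2 hA1
    simpa using this
  -- α ≤ 1 and 1 ≤ β
  have hβ1 : (1 : ℝ) ≤ β := by
    refine ge_of_tendsto hβ ?_
    filter_upwards [eventually_gt_atTop (0 : ℝ)] with x hx
    exact (one_le_div hx).2 (hge x)
  have hα1 : α ≤ 1 := by
    refine le_of_tendsto hα ?_
    filter_upwards [eventually_lt_atBot (0 : ℝ)] with x hx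
    rw [div_le_one_iff]
    exact Or.inr (Or.inr ⟨hx, hge x⟩)
  have hβpos : (0 : ℝ) < β := lt_of_lt_of_le one_pos hβ1
  set b : ℝ := p * α / (2 * (1 - p) * β) with hbdef
  have h1p : (0 : ℝ) < 1 - p := by linarith
  have hb0 : 0 < b := by
    apply div_pos (mul_pos hp0 hαpos)
    positivity
  have hbβ : (1 - p) * β * b = p * α / 2 := by
    field_simp [hbdef]
    rw [hbdef]; field_simp
  -- the random variable
  set X : Ω → ℝ := fun ω => if ω ∈ A then 1 else -b with hXdef
  have hXrep : X = A.indicator (fun _ => (1 : ℝ) + b) + fun _ => -b := by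
    funext ω
    by_cases hω : ω ∈ A <;> simp [hXdef, hω]
  have hXint : Integrable X μ := by
    rw [hXrep]
    exact ((integrable_const _).indicator hA).add (integrable_const _)
  have hXmean : ∫ ω, X ω ∂μ = p - (1 - p) * b := by
    rw [hXrep]
    simp only [Pi.add_apply]
    rw [integral_add ((integrable_const _).indicator hA) (integrable_const _),
      integral_indicator_const _ hA, integral_const]
    simp [smul_eq_mul]
    simp only [show μ.real A = p from rfl]
    ring
  have hloss : ∀ lam : ℝ,
      ∫ ω, l (-(lam * X ω)) ∂μ = p * l (-lam) + (1 - p) * l (lam * b) := by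
    intro lam
    have heq : ∀ ω, l (-(lam * X ω)) =
        A.indicator (fun _ => l (-lam) - l (lam * b)) ω + l (lam * b) := by
      intro ω
      by_cases hω : ω ∈ A
      · simp [hXdef, hω]
      · simp [hXdef, hω, mul_neg]
    simp only [heq]
    rw [integral_add ((integrable_const _).indicator hA) (integrable_const _),
      integral_indicator_const _ hA, integral_const]
    simp [smul_eq_mul]
    simp only [show μ.real A = p from rfl]
    ring
  refine ⟨X, hXint, ?_, ?_, ?_⟩
  · -- positive mean
    rw [hXmean]
    have h2 : (1 - p) * b = p * α / (2 * β) := by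
      field_simp [hbdef]
      rw [hbdef]; field_simp
    rw [h2, sub_pos, div_lt_iff₀ (by positivity : (0:ℝ) < 2 * β)]
    nlinarith
  · -- probability of being negative
    have hset : {ω | X ω < 0} = Aᶜ := by
      ext ω
      by_cases hω : ω ∈ A <;> simp [hXdef, hω, hb0]
    rw [hset, measure_compl hA hAne, measure_univ]
    exact tsub_pos_of_lt hA1
  · -- divergence to -∞
    have hfun : (fun lam : ℝ => ∫ ω, l (-(lam * X ω)) ∂μ) =
        fun lam => p * l (-lam) + (1 - p) * l (lam * b) := funext hloss
    rw [hfun]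
    set c : ℝ := p + (1 - p) * b with hcdef
    have hc0 : 0 < c := by positivity
    set ε : ℝ := p * α / (4 * c) with hεdef
    have hε0 : 0 < ε := by positivity
    have hεc : ε * c = p * α / 4 := by
      field_simp [hεdef]
      rw [hεdef]; field_simp
    set K : ℝ := -(p * (α - ε)) + (1 - p) * (β + ε) * b with hKdef
    have hK : K = -(p * α) / 4 := by
      have : K = -(p * α) + (1 - p) * β * b + ε * (p + (1 - p) * b) := by
        rw [hKdef]; ring
      rw [this, hbβ, ← hcdef, hεc]; ring
    have hKneg : K < 0 := by
      rw [hK]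
      have : 0 < p * α := mul_pos hp0 hαpos
      linarith
    have hKtend : Tendsto (fun lam : ℝ => K * lam) atTop atBot :=
      (tendsto_const_mul_atBot_of_neg hKneg).2 tendsto_id
    refine tendsto_atBot_mono' atTop ?_ hKtend
    -- eventual upper bounds from the limits
    have hαev : ∀ᶠ x : ℝ in atBot, l x < (α - ε) * x := by
      filter_upwards [hα.eventually (eventually_gt_nhds (by linarith : α - ε < α)),
        eventually_lt_atBot (0 : ℝ)] with x hx hx0
      exact (lt_div_iff_of_neg hx0).1 hx
    have hβev : ∀ᶠ x : ℝ in atTop, l x < (β + ε) * x := by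
      filter_upwards [hβ.eventually (eventually_lt_nhds (by linarith : β < β + ε)),
        eventually_gt_atTop (0 : ℝ)] with x hx hx0
      exact (div_lt_iff₀ hx0).1 hx
    obtain ⟨N, hN⟩ := eventually_atBot.1 hαev
    obtain ⟨M, hM⟩ := eventually_atTop.1 hβev
    filter_upwards [eventually_ge_atTop (-N), eventually_ge_atTop (M / b)] with lam h1 h2
    have hl1 : l (-lam) < (α - ε) * (-lam) := hN _ (by linarith)
    have hl2 : l (lam * b) < (β + ε) * (lam * b) :=
      hM _ ((div_le_iff₀ hb0).1 h2)
    have e1 : p * l (-lam) ≤ p * ((α - ε) * (-lam)) :=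
      mul_le_mul_of_nonneg_left hl1.le hp0.le
    have e2 : (1 - p) * l (lam * b) ≤ (1 - p) * ((β + ε) * (lam * b)) :=
      mul_le_mul_of_nonneg_left hl2.le h1p.le
    have : p * ((α - ε) * (-lam)) + (1 - p) * ((β + ε) * (lam * b)) = K * lam := by
      rw [hKdef]; ring
    linarith
end

section
/- Let g : (0,1] → [0,∞] be nonincreasing with g(1) = 0 and whose effective domain strictly contains {1}. Define ES^g(X) := sup_{α∈(0,1]}(ES^α(X) - g(α)) on L^1. Then ES^g admits the dual representation ES^g(X) = sup_{Z ∈ D ∩ L^∞, g(‖Z‖_∞^{-1}) < ∞} (E[-ZX] - g(‖Z‖_∞^{-1})), where D = {Z ∈ L^1 : Z ≥ 0 a.s., E[Z]=1}. -/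
open MeasureTheory Set Filter Topology
open scoped ENNReal

/-- Value at Risk at level `u`. -/
noncomputable def VaR {Ω : Type*} [MeasurableSpace Ω] (μ : Measure Ω)
    (X : Ω → ℝ) (u : ℝ) : ℝ :=
  sInf {m : ℝ | μ {ω | m + X ω < 0} ≤ ENNReal.ofReal u}

/-- Expected Shortfall at level `a`. -/
noncomputable def ES {Ω : Type*} [MeasurableSpace Ω] (μ : Measure Ω)
    (X : Ω → ℝ) (a : ℝ) : ℝ :=
  a⁻¹ * ∫ u in (0:ℝ)..a, VaR μ X u


section Aux
variable {Ω : Type*} [MeasurableSpace Ω]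

/-- survival function -/
noncomputable def sv (μ : Measure Ω) (Y : Ω → ℝ) (m : ℝ) : ℝ≥0∞ := μ {ω | m < Y ω}

/-- upper quantile function -/
noncomputable def qf (μ : Measure Ω) (Y : Ω → ℝ) (u : ℝ) : ℝ :=
  sInf {m : ℝ | sv μ Y m ≤ ENNReal.ofReal u}

lemma sv_def (μ : Measure Ω) (Y : Ω → ℝ) (m : ℝ) : sv μ Y m = μ {ω | m < Y ω} := rfl

lemma qf_def (μ : Measure Ω) (Y : Ω → ℝ) (u : ℝ) :
    qf μ Y u = sInf {m : ℝ | sv μ Y m ≤ ENNReal.ofReal u} := rfl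

variable {μ : Measure Ω} {Y : Ω → ℝ}

lemma sv_anti : Antitone (sv μ Y) := fun m m' h =>
  measure_mono (fun ω hω => lt_of_le_of_lt h hω)

lemma sv_meas (hYm : Measurable Y) (m : ℝ) : MeasurableSet {ω | m < Y ω} :=
  measurableSet_lt measurable_const hYm

lemma tendsto_sv_atTop [IsProbabilityMeasure μ] (hYm : Measurable Y) :
    Tendsto (fun n : ℕ => sv μ Y n) atTop (𝓝 0) := by
  have hanti : Antitone (fun n : ℕ => {ω | (n : ℝ) < Y ω}) := by
    intro n n' h ω hω
    simp only [mem_setOf_eq] at hω ⊢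
    have : (n : ℝ) ≤ (n' : ℝ) := by exact_mod_cast h
    linarith
  have h0 : (⋂ n : ℕ, {ω | (n : ℝ) < Y ω}) = ∅ := by
    ext ω
    simp only [mem_iInter, mem_setOf_eq, mem_empty_iff_false, iff_false, not_forall, not_lt]
    obtain ⟨n, hn⟩ := exists_nat_gt (Y ω)
    exact ⟨n, hn.le⟩
  have h := tendsto_measure_iInter_atTop (μ := μ)
    (fun n => (sv_meas hYm _).nullMeasurableSet) hanti ⟨0, measure_ne_top _ _⟩
  rw [h0] at h
  simpa [sv, Function.comp_def] using h

lemma tendsto_sv_neg [IsProbabilityMeasure μ] :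
    Tendsto (fun n : ℕ => sv μ Y (-(n : ℝ))) atTop (𝓝 1) := by
  have hmono : Monotone (fun n : ℕ => {ω | -(n : ℝ) < Y ω}) := by
    intro n n' h ω hω
    simp only [mem_setOf_eq] at hω ⊢
    have : (n : ℝ) ≤ (n' : ℝ) := by exact_mod_cast h
    linarith
  have h0 : (⋃ n : ℕ, {ω | -(n : ℝ) < Y ω}) = univ := by
    ext ω
    simp only [mem_iUnion, mem_setOf_eq, mem_univ, iff_true]
    obtain ⟨n, hn⟩ := exists_nat_gt (-(Y ω))
    exact ⟨n, by linarith⟩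
  have h := tendsto_measure_iUnion_atTop (μ := μ) hmono
  rw [h0] at h
  simpa [sv, measure_univ, Function.comp_def] using h

lemma sv_exists_le [IsProbabilityMeasure μ] (hYm : Measurable Y) {u : ℝ} (hu : 0 < u) :
    ∃ m : ℝ, sv μ Y m ≤ ENNReal.ofReal u := by
  obtain ⟨n, hn⟩ := ((tendsto_sv_atTop (μ := μ) hYm).eventually_lt_const
    (ENNReal.ofReal_pos.2 hu)).exists
  exact ⟨n, hn.le⟩

lemma sv_bddBelow [IsProbabilityMeasure μ] {u : ℝ} (hu1 : u < 1) :
    BddBelow {m : ℝ | sv μ Y m ≤ ENNReal.ofReal u} := by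
  have h1 : ENNReal.ofReal u < 1 := ENNReal.ofReal_lt_one.2 hu1
  obtain ⟨n, hn⟩ := ((tendsto_sv_neg (μ := μ) (Y := Y)).eventually_const_lt h1).exists
  refine ⟨-(n : ℝ), fun m hm => ?_⟩
  by_contra h
  push_neg at h
  exact absurd (le_trans (sv_anti h.le) hm) (not_le.2 hn)

lemma sv_qf_le [IsProbabilityMeasure μ] (hYm : Measurable Y) {u : ℝ} (hu : 0 < u) (hu1 : u < 1) :
    sv μ Y (qf μ Y u) ≤ ENNReal.ofReal u := by
  set v := qf μ Y u with hv
  have hne : {m : ℝ | sv μ Y m ≤ ENNReal.ofReal u}.Nonempty := sv_exists_le hYm hu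
  have hbdd := sv_bddBelow (μ := μ) (Y := Y) hu1
  have hset : {ω | v < Y ω} = ⋃ n : ℕ, {ω | v + 1 / ((n : ℝ) + 1) < Y ω} := by
    ext ω
    simp only [mem_setOf_eq, mem_iUnion]
    constructor
    · intro h
      obtain ⟨n, hn⟩ := exists_nat_one_div_lt (sub_pos.2 h)
      exact ⟨n, by linarith⟩
    · rintro ⟨n, hn⟩
      have : (0 : ℝ) < 1 / ((n : ℝ) + 1) := by positivity
      linarith
  have hmono : Monotone (fun n : ℕ => {ω | v + 1 / ((n : ℝ) + 1) < Y ω}) := by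
    intro n n' h ω hω
    simp only [mem_setOf_eq] at hω ⊢
    have hc : (n : ℝ) ≤ (n' : ℝ) := by exact_mod_cast h
    have : (1 : ℝ) / ((n' : ℝ) + 1) ≤ 1 / ((n : ℝ) + 1) := by
      apply one_div_le_one_div_of_le
      · positivity
      · linarith
    linarith
  have htend := tendsto_measure_iUnion_atTop (μ := μ) hmono
  rw [← hset] at htend
  refine le_of_tendsto htend (Eventually.of_forall fun n => ?_)
  have hlt : v < v + 1 / ((n : ℝ) + 1) := by
    have : (0 : ℝ) < 1 / ((n : ℝ) + 1) := by positivity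
    linarith
  obtain ⟨m, hm, hmlt⟩ := (csInf_lt_iff hbdd hne).1 (hv ▸ hlt)
  exact le_trans (sv_anti hmlt.le) hm

lemma qf_le_iff [IsProbabilityMeasure μ] (hYm : Measurable Y) {u : ℝ} (hu : 0 < u)
    (hu1 : u < 1) {m : ℝ} :
    qf μ Y u ≤ m ↔ sv μ Y m ≤ ENNReal.ofReal u := by
  constructor
  · intro h
    exact le_trans (sv_anti h) (sv_qf_le hYm hu hu1)
  · intro h
    exact csInf_le (sv_bddBelow hu1) h

lemma qf_anti [IsProbabilityMeasure μ] (hYm : Measurable Y) {u u' : ℝ} (hu : 0 < u)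
    (h : u ≤ u') (hu1 : u' < 1) :
    qf μ Y u' ≤ qf μ Y u := by
  have hu' : 0 < u' := lt_of_lt_of_le hu h
  have h1 : u < 1 := lt_of_le_of_lt h hu1
  rw [qf_le_iff hYm hu' hu1]
  exact le_trans (sv_qf_le hYm hu h1) (ENNReal.ofReal_le_ofReal h)

/-- extension of `qf` by `0` outside `(0,1)` -/
noncomputable def q1 (μ : Measure Ω) (Y : Ω → ℝ) (u : ℝ) : ℝ :=
  if u ∈ Ioo (0 : ℝ) 1 then qf μ Y u else 0

lemma q1_eq_qf {u : ℝ} (hu : u ∈ Ioo (0 : ℝ) 1) : q1 μ Y u = qf μ Y u := if_pos hu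

lemma q1_le_iff [IsProbabilityMeasure μ] (hYm : Measurable Y) {u : ℝ}
    (hu : u ∈ Ioo (0 : ℝ) 1) {m : ℝ} :
    q1 μ Y u ≤ m ↔ (sv μ Y m).toReal ≤ u := by
  rw [q1_eq_qf hu, qf_le_iff hYm hu.1 hu.2,
    ENNReal.le_ofReal_iff_toReal_le (show sv μ Y m ≠ ⊤ from measure_ne_top _ _) hu.1.le]

lemma q1_measurable [IsProbabilityMeasure μ] (hYm : Measurable Y) : Measurable (q1 μ Y) := by
  apply measurable_of_Iic
  intro m
  have hpre : q1 μ Y ⁻¹' Iic m =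
      (Ioo (0 : ℝ) 1 ∩ Ici (sv μ Y m).toReal) ∪ ((Ioo (0 : ℝ) 1)ᶜ ∩ {_u : ℝ | (0 : ℝ) ≤ m}) := by
    ext u
    simp only [mem_preimage, mem_Iic, mem_union, mem_inter_iff, mem_compl_iff, mem_setOf_eq,
      mem_Ici]
    by_cases hu : u ∈ Ioo (0 : ℝ) 1
    · simp only [hu, not_true_eq_false, false_and, or_false, true_and]
      exact q1_le_iff hYm hu
    · simp only [q1, hu, if_false, not_false_eq_true, true_and, false_and, false_or]
  rw [hpre]
  refine (measurableSet_Ioo.inter measurableSet_Ici).union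
    (measurableSet_Ioo.compl.inter (MeasurableSet.const _))

lemma q1_preimage_inter [IsProbabilityMeasure μ] (hYm : Measurable Y) (m : ℝ) :
    q1 μ Y ⁻¹' Iic m ∩ Ioo (0 : ℝ) 1 = Ioo (0 : ℝ) 1 ∩ Ici (sv μ Y m).toReal := by
  ext u
  simp only [mem_inter_iff, mem_preimage, mem_Iic, mem_Ici]
  constructor
  · rintro ⟨h1, hu⟩
    exact ⟨hu, (q1_le_iff hYm hu).1 h1⟩
  · rintro ⟨hu, h2⟩
    exact ⟨(q1_le_iff hYm hu).2 h2, hu⟩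

lemma volume_Ioo_inter_Ici {t : ℝ} (ht0 : 0 ≤ t) :
    volume (Ioo (0 : ℝ) 1 ∩ Ici t) = ENNReal.ofReal (1 - t) := by
  rcases eq_or_lt_of_le ht0 with h | h
  · rw [← h]
    have h2 : Ioo (0 : ℝ) 1 ∩ Ici (0 : ℝ) = Ioo 0 1 := inter_eq_left.2 fun u hu => hu.1.le
    simp [h2, Real.volume_Ioo]
  · have h2 : Ioo (0 : ℝ) 1 ∩ Ici t = Ico t 1 := by
      ext u
      simp only [mem_inter_iff, mem_Ioo, mem_Ici, mem_Ico]
      constructor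
      · rintro ⟨⟨_, h1⟩, h2⟩; exact ⟨h2, h1⟩
      · rintro ⟨h1, h2⟩; exact ⟨⟨lt_of_lt_of_le h h1, h2⟩, h1⟩
    rw [h2, Real.volume_Ico]

instance : IsProbabilityMeasure (volume.restrict (Ioo (0 : ℝ) 1)) :=
  ⟨by simp [Real.volume_Ioo]⟩

lemma map_q1_eq [IsProbabilityMeasure μ] (hYm : Measurable Y) :
    Measure.map (q1 μ Y) (volume.restrict (Ioo (0 : ℝ) 1)) = Measure.map Y μ := by
  have hq1 := q1_measurable (μ := μ) (Y := Y) hYm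
  haveI : IsProbabilityMeasure (Measure.map (q1 μ Y) (volume.restrict (Ioo (0 : ℝ) 1))) :=
    Measure.isProbabilityMeasure_map hq1.aemeasurable
  haveI : IsProbabilityMeasure (Measure.map Y μ) := Measure.isProbabilityMeasure_map hYm.aemeasurable
  apply Measure.ext_of_Iic
  intro m
  rw [Measure.map_apply hq1 measurableSet_Iic, Measure.map_apply hYm measurableSet_Iic,
    Measure.restrict_apply (hq1 measurableSet_Iic), q1_preimage_inter hYm m,
    volume_Ioo_inter_Ici ENNReal.toReal_nonneg]
  have hcompl : Y ⁻¹' Iic m = {ω | m < Y ω}ᶜ := by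
    ext ω; simp [not_lt]
  rw [hcompl, measure_compl (sv_meas hYm m) (measure_ne_top _ _), measure_univ]
  rw [ENNReal.ofReal_sub _ ENNReal.toReal_nonneg, ENNReal.ofReal_one,
    ENNReal.ofReal_toReal (show sv μ Y m ≠ ⊤ from measure_ne_top _ _)]
  rfl

lemma integral_q1_eq [IsProbabilityMeasure μ] (hYm : Measurable Y)
    {φ : ℝ → ℝ} (hφ : Measurable φ) (hint : Integrable (fun ω => φ (Y ω)) μ) :
    IntegrableOn (fun u => φ (q1 μ Y u)) (Ioo (0 : ℝ) 1) volume ∧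
      ∫ u in Ioo (0 : ℝ) 1, φ (q1 μ Y u) = ∫ ω, φ (Y ω) ∂μ := by
  have hq1 := q1_measurable (μ := μ) (Y := Y) hYm
  have hmap : Integrable φ (Measure.map Y μ) :=
    (integrable_map_measure hφ.aestronglyMeasurable hYm.aemeasurable).2 hint
  have hmap1 : Integrable φ (Measure.map (q1 μ Y) (volume.restrict (Ioo (0 : ℝ) 1))) := by
    rw [map_q1_eq hYm]; exact hmap
  constructor
  · exact (integrable_map_measure hφ.aestronglyMeasurable hq1.aemeasurable).1 hmap1
  · rw [← integral_map hq1.aemeasurable hφ.aestronglyMeasurable, map_q1_eq hYm,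
      integral_map hYm.aemeasurable hφ.aestronglyMeasurable]

lemma VaR_eq_qf (X : Ω → ℝ) (u : ℝ) : VaR μ X u = qf μ (fun ω => -X ω) u := by
  rw [VaR, qf_def]
  congr 1
  ext m
  simp only [mem_setOf_eq, sv_def]
  have : {ω | m + X ω < 0} = {ω | m < -X ω} := by
    ext ω; simp only [mem_setOf_eq]; constructor <;> intro h <;> linarith
  rw [this]

lemma ES_eq_setIntegral [IsProbabilityMeasure μ] (X : Ω → ℝ) {a : ℝ}
    (ha0 : 0 < a) (ha1 : a ≤ 1) :
    ES μ X a = a⁻¹ * ∫ u in Ioo (0 : ℝ) a, q1 μ (fun ω => -X ω) u := by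
  rw [ES, intervalIntegral.integral_of_le ha0.le, integral_Ioc_eq_integral_Ioo]
  congr 1
  apply setIntegral_congr_fun measurableSet_Ioo
  intro u hu
  rw [VaR_eq_qf, ← q1_eq_qf ⟨hu.1, lt_of_lt_of_le hu.2 ha1⟩]

lemma integrableOn_q1 [IsProbabilityMeasure μ] (hYm : Measurable Y) (hYi : Integrable Y μ) :
    IntegrableOn (q1 μ Y) (Ioo (0 : ℝ) 1) volume := by
  have h := (integral_q1_eq (μ := μ) hYm measurable_id (by simpa using hYi)).1
  simpa using h

lemma ES_one [IsProbabilityMeasure μ] (X : Ω → ℝ) (hXm : Measurable X) (hX : Integrable X μ) :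
    ES μ X 1 = ∫ ω, -X ω ∂μ := by
  have hY : Integrable (fun ω => -X ω) μ := hX.neg
  have h := (integral_q1_eq (μ := μ) hXm.neg measurable_id (by simpa using hY)).2
  rw [ES_eq_setIntegral X one_pos le_rfl]
  simp only [inv_one, one_mul]
  exact h

lemma key_identity [IsProbabilityMeasure μ] (hYm : Measurable Y) (hYi : Integrable Y μ)
    {a : ℝ} (ha0 : 0 < a) (ha1 : a < 1) :
    ∫ u in Ioo (0 : ℝ) a, q1 μ Y u
      = a * qf μ Y a + ∫ ω, max (Y ω - qf μ Y a) 0 ∂μ := by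
  set v := qf μ Y a with hv
  have hφm : Measurable fun x : ℝ => max (x - v) 0 :=
    (measurable_id.sub measurable_const).max measurable_const
  have hφi : Integrable (fun ω => max (Y ω - v) 0) μ := (hYi.sub (integrable_const v)).pos_part
  have htrans := (integral_q1_eq (μ := μ) hYm hφm hφi).2
  have hpt : EqOn (fun u => max (q1 μ Y u - v) 0)
      ((Ioo (0 : ℝ) a).indicator fun u => q1 μ Y u - v) (Ioo (0 : ℝ) 1) := by
    intro u hu
    by_cases hua : u < a
    · have hu' : u ∈ Ioo (0 : ℝ) a := ⟨hu.1, hua⟩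
      rw [indicator_of_mem hu']
      have hle : v ≤ q1 μ Y u := by
        rw [q1_eq_qf hu]; exact qf_anti hYm hu.1 hua.le ha1
      exact max_eq_left (by linarith)
    · push_neg at hua
      rw [indicator_of_notMem (fun h => absurd h.2 (not_lt.2 hua))]
      have hle : q1 μ Y u ≤ v := by
        rw [q1_eq_qf hu]; exact qf_anti hYm ha0 hua hu.2
      exact max_eq_right (by linarith)
  have h1 : ∫ u in Ioo (0 : ℝ) 1, max (q1 μ Y u - v) 0
      = ∫ u in Ioo (0 : ℝ) a, (q1 μ Y u - v) := by
    rw [setIntegral_congr_fun measurableSet_Ioo hpt, setIntegral_indicator measurableSet_Ioo,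
      inter_eq_right.2 (Ioo_subset_Ioo le_rfl ha1.le)]
  have hIa : IntegrableOn (q1 μ Y) (Ioo (0 : ℝ) a) volume :=
    (integrableOn_q1 hYm hYi).mono_set (Ioo_subset_Ioo le_rfl ha1.le)
  have hIc : IntegrableOn (fun _ : ℝ => v) (Ioo (0 : ℝ) a) volume :=
    integrableOn_const (by rw [Real.volume_Ioo]; exact ENNReal.ofReal_ne_top)
  have h2 : ∫ u in Ioo (0 : ℝ) a, (q1 μ Y u - v)
      = (∫ u in Ioo (0 : ℝ) a, q1 μ Y u) - a * v := by
    rw [integral_sub hIa hIc, setIntegral_const, Real.volume_real_Ioo_of_le ha0.le, smul_eq_mul]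
    ring_nf
  rw [h1, h2] at htrans
  linarith

lemma ES_formula [IsProbabilityMeasure μ] (X : Ω → ℝ) (hXm : Measurable X)
    (hX : Integrable X μ) {a : ℝ} (ha0 : 0 < a) (ha1 : a < 1) :
    ES μ X a = VaR μ X a + a⁻¹ * ∫ ω, max (-X ω - VaR μ X a) 0 ∂μ := by
  rw [ES_eq_setIntegral X ha0 ha1.le, VaR_eq_qf,
    key_identity (Y := fun ω => -X ω) hXm.neg hX.neg ha0 ha1, mul_add, ← mul_assoc,
    inv_mul_cancel₀ (ne_of_gt ha0), one_mul]

lemma integral_mul_le [IsProbabilityMeasure μ] (X : Ω → ℝ) (hXm : Measurable X)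
    (hX : Integrable X μ) {a : ℝ} (ha0 : 0 < a) (ha1 : a < 1)
    {Z : Ω → ℝ} (hZm : AEStronglyMeasurable Z μ) (hZ0 : ∀ᵐ ω ∂μ, 0 ≤ Z ω)
    (hZb : ∀ᵐ ω ∂μ, Z ω ≤ a⁻¹) (hZ1 : ∫ ω, Z ω ∂μ = 1) :
    ∫ ω, Z ω * (-X ω) ∂μ ≤ ES μ X a := by
  set v := VaR μ X a with hv
  have hYi : Integrable (fun ω => -X ω) μ := hX.neg
  have hnorm : ∀ᵐ ω ∂μ, ‖Z ω‖ ≤ a⁻¹ := by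
    filter_upwards [hZ0, hZb] with ω h0 hb
    rw [Real.norm_eq_abs, abs_of_nonneg h0]; exact hb
  have hZi : Integrable Z μ := Integrable.mono' (integrable_const a⁻¹) hZm hnorm
  have hZY : Integrable (fun ω => Z ω * (-X ω)) μ := hYi.bdd_mul hZm hnorm
  have hφi : Integrable (fun ω => max (-X ω - v) 0) μ :=
    (hYi.sub (integrable_const v)).pos_part
  have hle : ∀ᵐ ω ∂μ, Z ω * (-X ω - v) ≤ a⁻¹ * max (-X ω - v) 0 := by
    filter_upwards [hZ0, hZb] with ω h0 hb
    rcases le_or_gt v (-X ω) with h | h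
    · rw [max_eq_left (by linarith)]
      exact mul_le_mul_of_nonneg_right hb (by linarith)
    · rw [max_eq_right (by linarith), mul_zero]
      exact mul_nonpos_of_nonneg_of_nonpos h0 (by linarith)
  have hint1 : Integrable (fun ω => Z ω * (-X ω - v)) μ := by
    have he : (fun ω => Z ω * (-X ω - v)) = fun ω => Z ω * (-X ω) - v * Z ω := by
      ext ω; ring
    rw [he]; exact hZY.sub (hZi.const_mul v)
  have h2 : ∫ ω, Z ω * (-X ω - v) ∂μ ≤ ∫ ω, a⁻¹ * max (-X ω - v) 0 ∂μ :=
    integral_mono_ae hint1 (hφi.const_mul _) hle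
  have h3 : ∫ ω, Z ω * (-X ω - v) ∂μ = ∫ ω, Z ω * (-X ω) ∂μ - v := by
    have he : (fun ω => Z ω * (-X ω - v)) = fun ω => Z ω * (-X ω) - v * Z ω := by
      ext ω; ring
    rw [he, integral_sub hZY (hZi.const_mul v), integral_const_mul, hZ1, mul_one]
  rw [integral_const_mul] at h2
  rw [ES_formula X hXm hX ha0 ha1]
  rw [h3] at h2
  linarith

lemma ae_eq_one [IsProbabilityMeasure μ] {Z : Ω → ℝ} (hZi : Integrable Z μ)
    (hZb : ∀ᵐ ω ∂μ, Z ω ≤ 1) (hZ1 : ∫ ω, Z ω ∂μ = 1) : Z =ᵐ[μ] fun _ => 1 := by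
  have h0 : 0 ≤ᵐ[μ] fun ω => 1 - Z ω := by filter_upwards [hZb] with ω h; simp; linarith
  have hi : Integrable (fun ω => 1 - Z ω) μ := (integrable_const 1).sub hZi
  have hz : ∫ ω, (1 - Z ω) ∂μ = 0 := by
    rw [integral_sub (integrable_const 1) hZi, hZ1]; simp
  have h := (integral_eq_zero_iff_of_nonneg_ae h0 hi).1 hz
  filter_upwards [h] with ω hω
  have : 1 - Z ω = 0 := hω
  show Z ω = 1
  linarith

lemma one_le_eLpNorm_top [IsProbabilityMeasure μ] {Z : Ω → ℝ} (hZi : Integrable Z μ)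
    (hZ1 : ∫ ω, Z ω ∂μ = 1) : 1 ≤ eLpNorm Z ⊤ μ := by
  by_contra h
  push_neg at h
  have hne : eLpNorm Z ⊤ μ ≠ ⊤ := (h.trans ENNReal.one_lt_top).ne
  have hb : ∀ᵐ ω ∂μ, Z ω ≤ (eLpNorm Z ⊤ μ).toReal := by
    have hae := ae_le_eLpNormEssSup (f := Z) (μ := μ)
    filter_upwards [hae] with ω hω
    have h1 : ‖Z ω‖ ≤ (eLpNormEssSup Z μ).toReal := by
      have := ENNReal.toReal_mono (by rw [← eLpNorm_exponent_top]; exact hne) hω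
      simpa using this
    rw [eLpNorm_exponent_top]
    exact le_trans (le_abs_self _) (by rwa [Real.norm_eq_abs] at h1)
  have h2 : (1 : ℝ) ≤ (eLpNorm Z ⊤ μ).toReal := by
    rw [← hZ1]
    calc ∫ ω, Z ω ∂μ ≤ ∫ _ω, (eLpNorm Z ⊤ μ).toReal ∂μ :=
          integral_mono_ae hZi (integrable_const _) hb
      _ = (eLpNorm Z ⊤ μ).toReal := by simp
  have h3 : (eLpNorm Z ⊤ μ).toReal < 1 := by
    rw [show (1:ℝ) = (1:ℝ≥0∞).toReal by simp]
    exact (ENNReal.toReal_lt_toReal hne ENNReal.one_ne_top).2 h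
  linarith

lemma exists_optimizer [IsProbabilityMeasure μ] (X : Ω → ℝ) (hXm : Measurable X)
    (hX : Integrable X μ) {a : ℝ} (ha0 : 0 < a) (ha1 : a < 1) :
    ∃ Z : Ω → ℝ, (Integrable Z μ ∧ (∀ᵐ ω ∂μ, 0 ≤ Z ω) ∧ (∫ ω, Z ω ∂μ) = 1) ∧
      MemLp Z ⊤ μ ∧ eLpNorm Z ⊤ μ ≤ ENNReal.ofReal a⁻¹ ∧
      ∫ ω, Z ω * (-X ω) ∂μ = ES μ X a := by
  set Y := fun ω => -X ω with hYdef
  have hYm : Measurable Y := hXm.neg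
  have hYi : Integrable Y μ := hX.neg
  set v := qf μ Y a with hvdef
  set A := {ω | v < Y ω} with hAdef
  set B := {ω | Y ω = v} with hBdef
  have hA : MeasurableSet A := sv_meas hYm v
  have hB : MeasurableSet B := hYm (measurableSet_singleton v)
  set p' := (μ A).toReal with hp'def
  set b' := (μ B).toReal with hb'def
  have hp'0 : 0 ≤ p' := ENNReal.toReal_nonneg
  have hb'0 : 0 ≤ b' := ENNReal.toReal_nonneg
  have hp'a : p' ≤ a := by
    have h := sv_qf_le (μ := μ) hYm ha0 ha1
    rw [sv_def] at h
    exact ENNReal.toReal_le_of_le_ofReal ha0.le h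
  -- a ≤ p' + b'
  have ha_le : a ≤ p' + b' := by
    have hge : ENNReal.ofReal a ≤ μ {ω | v ≤ Y ω} := by
      have hset : {ω | v ≤ Y ω} = ⋂ n : ℕ, {ω | v - 1 / ((n : ℝ) + 1) < Y ω} := by
        ext ω
        simp only [mem_setOf_eq, mem_iInter]
        constructor
        · intro h n
          have hpos : (0 : ℝ) < 1 / ((n : ℝ) + 1) := by positivity
          have h2 : v - 1 / ((n : ℝ) + 1) < v := by linarith
          exact lt_of_lt_of_le h2 h
        · intro h
          by_contra hc
          push_neg at hc
          obtain ⟨n, hn⟩ := exists_nat_one_div_lt (sub_pos.2 hc)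
          have := h n
          linarith
      have hanti : Antitone (fun n : ℕ => {ω | v - 1 / ((n : ℝ) + 1) < Y ω}) := by
        intro n n' h ω hω
        simp only [mem_setOf_eq] at hω ⊢
        have hc : (n : ℝ) ≤ (n' : ℝ) := by exact_mod_cast h
        have : (1 : ℝ) / ((n' : ℝ) + 1) ≤ 1 / ((n : ℝ) + 1) := by
          apply one_div_le_one_div_of_le
          · positivity
          · linarith
        linarith
      have htend := tendsto_measure_iInter_atTop (μ := μ)
        (fun n => (sv_meas hYm _).nullMeasurableSet) hanti ⟨0, measure_ne_top _ _⟩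
      rw [← hset] at htend
      refine ge_of_tendsto htend (Eventually.of_forall fun n => ?_)
      have hm : v - 1 / ((n : ℝ) + 1) ∉ {m : ℝ | sv μ Y m ≤ ENNReal.ofReal a} := by
        intro hmem
        have := csInf_le (sv_bddBelow ha1) hmem
        rw [← qf_def] at this
        have hpos : (0 : ℝ) < 1 / ((n : ℝ) + 1) := by positivity
        rw [← hvdef] at this
        linarith
      simp only [mem_setOf_eq, not_le] at hm
      rw [sv_def] at hm
      exact hm.le
    have hsplit : μ {ω | v ≤ Y ω} = μ A + μ B := by
      have hun : {ω | v ≤ Y ω} = A ∪ B := by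
        ext ω
        simp only [hAdef, hBdef, mem_setOf_eq, mem_union]
        constructor
        · intro h
          rcases lt_or_eq_of_le h with h' | h'
          · exact Or.inl h'
          · exact Or.inr h'.symm
        · rintro (h | h)
          · exact h.le
          · exact h.ge
      rw [hun, measure_union _ hB]
      intro s hsA hsB ω hω
      have h1 := hsA hω
      have h2 := hsB hω
      simp only [hAdef, hBdef, mem_setOf_eq] at h1 h2
      exact absurd h2 (ne_of_gt h1)
    have : (ENNReal.ofReal a).toReal ≤ (μ A + μ B).toReal := by
      rw [← hsplit]
      exact ENNReal.toReal_mono (by finiteness) hge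
    rwa [ENNReal.toReal_ofReal ha0.le, ENNReal.toReal_add (measure_ne_top _ _)
      (measure_ne_top _ _)] at this
  set c := if b' = 0 then (0 : ℝ) else (a - p') / (a * b') with hcdef
  have hc0 : 0 ≤ c := by
    rw [hcdef]
    split_ifs with h
    · exact le_rfl
    · have hb'pos : 0 < b' := lt_of_le_of_ne hb'0 (Ne.symm h)
      exact div_nonneg (by linarith) (by positivity)
  have hca : c ≤ a⁻¹ := by
    rw [hcdef]
    split_ifs with h
    · positivity
    · have hb'pos : 0 < b' := lt_of_le_of_ne hb'0 (Ne.symm h)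
      rw [div_le_iff₀ (by positivity)]
      have he : a⁻¹ * (a * b') = b' := by field_simp
      rw [he]
      linarith
  have hcb : c * b' = (a - p') / a := by
    rw [hcdef]
    split_ifs with h
    · rw [h, mul_zero]
      have : p' = a := le_antisymm hp'a (by rw [h] at ha_le; linarith)
      rw [this]
      simp
    · have hb'pos : 0 < b' := lt_of_le_of_ne hb'0 (Ne.symm h)
      field_simp
  set Z := fun ω => A.indicator (fun _ => a⁻¹) ω + B.indicator (fun _ => c) ω with hZdef
  have hZm : Measurable Z := (measurable_const.indicator hA).add (measurable_const.indicator hB)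
  have hAB : ∀ ω, ω ∈ A → ω ∉ B := by
    intro ω h1 h2
    simp only [hAdef, hBdef, mem_setOf_eq] at h1 h2
    exact absurd h2 (ne_of_gt h1)
  have hZ0 : ∀ ω, 0 ≤ Z ω :=
    fun ω => add_nonneg (indicator_nonneg (fun _ _ => by positivity) ω)
      (indicator_nonneg (fun _ _ => hc0) ω)
  have hZb : ∀ ω, Z ω ≤ a⁻¹ := by
    intro ω
    by_cases h1 : ω ∈ A
    · rw [hZdef]
      simp only [indicator_of_mem h1, indicator_of_notMem (hAB ω h1)]
      simp
    · rw [hZdef]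
      simp only [indicator_of_notMem h1, zero_add]
      by_cases h2 : ω ∈ B
      · rw [indicator_of_mem h2]; exact hca
      · rw [indicator_of_notMem h2]; positivity
  have hZi : Integrable Z μ :=
    ((integrable_const a⁻¹).indicator hA).add ((integrable_const c).indicator hB)
  have hint1 : ∫ ω, Z ω ∂μ = p' * a⁻¹ + c * b' := by
    rw [hZdef, integral_add ((integrable_const a⁻¹).indicator hA)
      ((integrable_const c).indicator hB), integral_indicator_const _ hA,
      integral_indicator_const _ hB, smul_eq_mul, smul_eq_mul, measureReal_def, measureReal_def]
    ring
  have hZ1 : ∫ ω, Z ω ∂μ = 1 := by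
    rw [hint1, hcb]
    field_simp
    ring
  -- the value of ∫ Z Y
  have hmax_eq : (fun ω => max (Y ω - v) 0) = A.indicator (fun ω => Y ω - v) := by
    ext ω
    by_cases h : ω ∈ A
    · rw [indicator_of_mem h]
      have : v < Y ω := h
      exact max_eq_left (by linarith)
    · rw [indicator_of_notMem h]
      have : ¬ v < Y ω := h
      push_neg at this
      exact max_eq_right (by linarith)
  have hIA : IntegrableOn Y A μ := hYi.integrableOn
  have hIcA : IntegrableOn (fun _ : Ω => v) A μ := (integrable_const v).integrableOn
  have hEplus : ∫ ω, max (Y ω - v) 0 ∂μ = (∫ ω in A, Y ω ∂μ) - v * p' := by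
    rw [hmax_eq, integral_indicator hA, integral_sub hIA hIcA, setIntegral_const, smul_eq_mul, measureReal_def]
    ring
  have hBint : ∫ ω in B, Y ω ∂μ = v * b' := by
    have : ∫ ω in B, Y ω ∂μ = ∫ _ω in B, v ∂μ :=
      setIntegral_congr_fun hB fun ω hω => hω
    rw [this, setIntegral_const, smul_eq_mul, measureReal_def]
    ring
  have hZY : ∫ ω, Z ω * Y ω ∂μ = a⁻¹ * (∫ ω in A, Y ω ∂μ) + c * (v * b') := by
    have hsplit : (fun ω => Z ω * Y ω)
        = fun ω => A.indicator (fun ω => a⁻¹ * Y ω) ω + B.indicator (fun ω => c * Y ω) ω := by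
      ext ω
      rw [hZdef]
      by_cases h1 : ω ∈ A
      · simp only [indicator_of_mem h1, indicator_of_notMem (hAB ω h1)]
        ring
      · simp only [indicator_of_notMem h1, zero_add]
        by_cases h2 : ω ∈ B
        · simp only [indicator_of_mem h2]
        · simp only [indicator_of_notMem h2]; ring
    have hiA : Integrable (A.indicator fun ω => a⁻¹ * Y ω) μ :=
      ((hYi.const_mul a⁻¹).integrableOn).integrable_indicator hA
    have hiB : Integrable (B.indicator fun ω => c * Y ω) μ :=
      ((hYi.const_mul c).integrableOn).integrable_indicator hB
    rw [hsplit, integral_add hiA hiB, integral_indicator hA, integral_indicator hB,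
      integral_const_mul, integral_const_mul, hBint]
  refine ⟨Z, ⟨hZi, Eventually.of_forall hZ0, hZ1⟩, ?_, ?_, ?_⟩
  · refine ⟨hZm.aestronglyMeasurable, ?_⟩
    rw [eLpNorm_exponent_top]
    refine lt_of_le_of_lt (eLpNormEssSup_le_of_ae_bound (C := a⁻¹)
      (Eventually.of_forall fun ω => ?_)) ENNReal.ofReal_lt_top
    rw [Real.norm_eq_abs, abs_of_nonneg (hZ0 ω)]
    exact hZb ω
  · rw [eLpNorm_exponent_top]
    exact eLpNormEssSup_le_of_ae_bound (C := a⁻¹) (Eventually.of_forall fun ω => by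
      rw [Real.norm_eq_abs, abs_of_nonneg (hZ0 ω)]; exact hZb ω)
  · rw [show (fun ω => -X ω) = Y from rfl] at *
    rw [hZY, ES_formula X hXm hX ha0 ha1]
    have hV : VaR μ X a = v := by rw [VaR_eq_qf]
    rw [hV]
    have hE : ∫ ω, max (-X ω - v) 0 ∂μ = (∫ ω in A, Y ω ∂μ) - v * p' := hEplus
    rw [hE]
    have hc2 : c * (v * b') = v * ((a - p') / a) := by
      rw [show c * (v * b') = v * (c * b') by ring, hcb]
    rw [hc2]
    field_simp
    ring

lemma ae_real_le_of_eLpNorm_le {Z : Ω → ℝ} {C : ℝ} (hC : 0 ≤ C)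
    (h : eLpNorm Z ⊤ μ ≤ ENNReal.ofReal C) : ∀ᵐ ω ∂μ, Z ω ≤ C := by
  filter_upwards [ae_le_eLpNormEssSup (f := Z) (μ := μ)] with ω hω
  have h2 : (‖Z ω‖₊ : ℝ≥0∞) ≤ ENNReal.ofReal C :=
    le_trans hω (by rw [← eLpNorm_exponent_top]; exact h)
  have h3 : ‖Z ω‖ ≤ C := by
    have h4 := ENNReal.toReal_mono ENNReal.ofReal_ne_top h2
    rwa [ENNReal.coe_toReal, coe_nnnorm, ENNReal.toReal_ofReal hC] at h4
  exact le_trans (le_abs_self _) (by rwa [Real.norm_eq_abs] at h3)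

theorem stmt15_meas (μ : Measure Ω) [IsProbabilityMeasure μ]
    (g : ℝ → EReal) (hg0 : ∀ x, 0 ≤ g x) (hganti : AntitoneOn g (Ioc 0 1))
    (hg1 : g 1 = 0)
    (X : Ω → ℝ) (hXm : Measurable X) (hX : Integrable X μ) :
    (⨆ a ∈ Ioc (0:ℝ) 1, (((ES μ X a : ℝ) : EReal) - g a)) =
      ⨆ Z ∈ {Z : Ω → ℝ |
          (Integrable Z μ ∧ (∀ᵐ ω ∂μ, 0 ≤ Z ω) ∧ (∫ ω, Z ω ∂μ) = 1) ∧
          MemLp Z ⊤ μ ∧ g (((eLpNorm Z ⊤ μ)⁻¹).toReal) ≠ ⊤},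
        ((((∫ ω, -(Z ω * X ω) ∂μ) : ℝ) : EReal) - g (((eLpNorm Z ⊤ μ)⁻¹).toReal)) := by
  apply le_antisymm
  · refine iSup₂_le fun a ha => ?_
    by_cases hga : g a = ⊤
    · rw [hga, EReal.sub_top]; exact bot_le
    rcases lt_or_eq_of_le ha.2 with h1 | h1
    · -- a < 1
      obtain ⟨Z, hZ1, hZ2, hZ3, hZ4⟩ := exists_optimizer X hXm hX ha.1 h1
      have hN1 : (1 : ℝ≥0∞) ≤ eLpNorm Z ⊤ μ := one_le_eLpNorm_top hZ1.1 hZ1.2.2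
      have hNne : eLpNorm Z ⊤ μ ≠ ⊤ := hZ2.2.ne
      have hN0 : eLpNorm Z ⊤ μ ≠ 0 := fun h => by
        rw [h] at hN1; exact absurd hN1 (by simp)
      have hinvne : (eLpNorm Z ⊤ μ)⁻¹ ≠ ⊤ := ENNReal.inv_ne_top.2 hN0
      have ha'a : a ≤ ((eLpNorm Z ⊤ μ)⁻¹).toReal := by
        have h5 : eLpNorm Z ⊤ μ ≤ (ENNReal.ofReal a)⁻¹ := by
          rw [← ENNReal.ofReal_inv_of_pos ha.1]; exact hZ3
        have h6 : ENNReal.ofReal a ≤ (eLpNorm Z ⊤ μ)⁻¹ := by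
          rw [← inv_inv (ENNReal.ofReal a)]
          exact ENNReal.inv_le_inv.2 h5
        calc a = (ENNReal.ofReal a).toReal := (ENNReal.toReal_ofReal ha.1.le).symm
          _ ≤ ((eLpNorm Z ⊤ μ)⁻¹).toReal := ENNReal.toReal_mono hinvne h6
      have ha'1 : ((eLpNorm Z ⊤ μ)⁻¹).toReal ≤ 1 := by
        rw [show (1:ℝ) = (1:ℝ≥0∞).toReal by simp]
        exact ENNReal.toReal_mono ENNReal.one_ne_top (ENNReal.inv_le_one.2 hN1)
      have ha'mem : ((eLpNorm Z ⊤ μ)⁻¹).toReal ∈ Ioc (0:ℝ) 1 :=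
        ⟨lt_of_lt_of_le ha.1 ha'a, ha'1⟩
      have hgle : g (((eLpNorm Z ⊤ μ)⁻¹).toReal) ≤ g a := hganti ha ha'mem ha'a
      have hmem : Z ∈ {Z : Ω → ℝ |
          (Integrable Z μ ∧ (∀ᵐ ω ∂μ, 0 ≤ Z ω) ∧ (∫ ω, Z ω ∂μ) = 1) ∧
          MemLp Z ⊤ μ ∧ g (((eLpNorm Z ⊤ μ)⁻¹).toReal) ≠ ⊤} :=
        ⟨hZ1, hZ2, fun h => hga (top_le_iff.1 (h ▸ hgle))⟩
      refine le_trans ?_ (le_iSup₂ Z hmem)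
      refine EReal.sub_le_sub ?_ hgle
      have heq : ∫ ω, -(Z ω * X ω) ∂μ = ES μ X a := by
        rw [← hZ4]; congr 1; ext ω; ring
      exact_mod_cast le_of_eq heq.symm
    · -- a = 1
      subst h1
      have hNeq : eLpNorm (fun _ : Ω => (1:ℝ)) ⊤ μ = 1 := by
        rw [eLpNorm_const (1:ℝ) (by simp) (IsProbabilityMeasure.ne_zero μ)]
        simp
      have hmem : (fun _ : Ω => (1:ℝ)) ∈ {Z : Ω → ℝ |
          (Integrable Z μ ∧ (∀ᵐ ω ∂μ, 0 ≤ Z ω) ∧ (∫ ω, Z ω ∂μ) = 1) ∧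
          MemLp Z ⊤ μ ∧ g (((eLpNorm Z ⊤ μ)⁻¹).toReal) ≠ ⊤} := by
        refine ⟨⟨integrable_const 1, Eventually.of_forall fun _ => zero_le_one, by simp⟩,
          memLp_const 1, ?_⟩
        rw [hNeq]
        simp only [inv_one, ENNReal.toReal_one]
        rw [hg1]
        exact EReal.zero_ne_top
      refine le_trans (le_of_eq ?_) (le_iSup₂ (fun _ : Ω => (1:ℝ)) hmem)
      rw [hNeq]
      simp only [inv_one, ENNReal.toReal_one]
      have heq : ∫ ω, -((fun _ : Ω => (1:ℝ)) ω * X ω) ∂μ = ES μ X 1 := by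
        rw [ES_one X hXm hX]
        congr 1; ext ω; simp
      rw [heq]
  · refine iSup₂_le fun Z hZ => ?_
    obtain ⟨⟨hZi, hZ0, hZ1⟩, hZl, hgne⟩ := hZ
    have hNne : eLpNorm Z ⊤ μ ≠ ⊤ := hZl.2.ne
    have hN1 : (1 : ℝ≥0∞) ≤ eLpNorm Z ⊤ μ := one_le_eLpNorm_top hZi hZ1
    have hN0 : eLpNorm Z ⊤ μ ≠ 0 := fun h => by
      rw [h] at hN1; exact absurd hN1 (by simp)
    have hinvne : (eLpNorm Z ⊤ μ)⁻¹ ≠ ⊤ := ENNReal.inv_ne_top.2 hN0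
    have ha'0 : 0 < ((eLpNorm Z ⊤ μ)⁻¹).toReal :=
      ENNReal.toReal_pos (ENNReal.inv_ne_zero.2 hNne) hinvne
    have ha'1 : ((eLpNorm Z ⊤ μ)⁻¹).toReal ≤ 1 := by
      rw [show (1:ℝ) = (1:ℝ≥0∞).toReal by simp]
      exact ENNReal.toReal_mono ENNReal.one_ne_top (ENNReal.inv_le_one.2 hN1)
    refine le_trans ?_ (le_iSup₂ (((eLpNorm Z ⊤ μ)⁻¹).toReal) ⟨ha'0, ha'1⟩)
    refine EReal.sub_le_sub ?_ le_rfl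
    rw [EReal.coe_le_coe_iff]
    have hrw : ∫ ω, -(Z ω * X ω) ∂μ = ∫ ω, Z ω * (-X ω) ∂μ := by
      congr 1; ext ω; ring
    rw [hrw]
    rcases lt_or_eq_of_le ha'1 with h1 | h1
    · have hNof : eLpNorm Z ⊤ μ ≤ ENNReal.ofReal (((eLpNorm Z ⊤ μ)⁻¹).toReal)⁻¹ := by
        rw [ENNReal.ofReal_inv_of_pos ha'0, ENNReal.ofReal_toReal hinvne, inv_inv]
      exact integral_mul_le X hXm hX ha'0 h1 hZi.1 hZ0
        (ae_real_le_of_eLpNorm_le (by positivity) hNof) hZ1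
    · have hNeq1 : eLpNorm Z ⊤ μ = 1 := by
        have h2 : (eLpNorm Z ⊤ μ)⁻¹ = 1 := by
          rw [← ENNReal.ofReal_toReal hinvne, h1]
          simp
        rw [← inv_inv (eLpNorm Z ⊤ μ), h2]
        simp
      have hb : ∀ᵐ ω ∂μ, Z ω ≤ 1 :=
        ae_real_le_of_eLpNorm_le zero_le_one (by rw [hNeq1]; simp)
      have heq := ae_eq_one hZi hb hZ1
      have h3 : ∫ ω, Z ω * (-X ω) ∂μ = ∫ ω, -X ω ∂μ := by
        apply integral_congr_ae
        filter_upwards [heq] with ω h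
        have h' : Z ω = 1 := h
        simp [h']
      rw [h3, h1, ES_one X hXm hX]

theorem stmt15_aemeas {Ω' : Type*} [MeasurableSpace Ω'] (μ : Measure Ω') [IsProbabilityMeasure μ]
    (g : ℝ → EReal) (hg0 : ∀ x, 0 ≤ g x) (hganti : AntitoneOn g (Ioc 0 1))
    (hg1 : g 1 = 0)
    (X : Ω' → ℝ) (hX : Integrable X μ) :
    (⨆ a ∈ Ioc (0:ℝ) 1, (((ES μ X a : ℝ) : EReal) - g a)) =
      ⨆ Z ∈ {Z : Ω' → ℝ |
          (Integrable Z μ ∧ (∀ᵐ ω ∂μ, 0 ≤ Z ω) ∧ (∫ ω, Z ω ∂μ) = 1) ∧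
          MemLp Z ⊤ μ ∧ g (((eLpNorm Z ⊤ μ)⁻¹).toReal) ≠ ⊤},
        ((((∫ ω, -(Z ω * X ω) ∂μ) : ℝ) : EReal) - g (((eLpNorm Z ⊤ μ)⁻¹).toReal)) := by
  have hsm := hX.1
  set X' := hsm.mk X with hX'def
  have hXm : Measurable X' := hsm.stronglyMeasurable_mk.measurable
  have hae : X =ᵐ[μ] X' := hsm.ae_eq_mk
  have hXi : Integrable X' μ := hX.congr hae
  have hVaR : ∀ u, VaR μ X u = VaR μ X' u := by
    intro u
    rw [VaR, VaR]
    congr 1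
    ext m
    simp only [mem_setOf_eq]
    have hμeq : μ {ω | m + X ω < 0} = μ {ω | m + X' ω < 0} := by
      apply measure_congr
      rw [eventuallyEq_set]
      filter_upwards [hae] with ω h
      simp only [mem_setOf_eq, h]
    rw [hμeq]
  have hES : ∀ a, ES μ X a = ES μ X' a := by
    intro a
    rw [ES, ES]
    congr 1
    apply intervalIntegral.integral_congr
    intro u _
    exact hVaR u
  have hL : (⨆ a ∈ Ioc (0:ℝ) 1, (((ES μ X a : ℝ) : EReal) - g a)) =
      (⨆ a ∈ Ioc (0:ℝ) 1, (((ES μ X' a : ℝ) : EReal) - g a)) := by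
    apply iSup_congr; intro a; apply iSup_congr; intro _; rw [hES a]
  have hR2 : (⨆ Z ∈ {Z : Ω' → ℝ |
          (Integrable Z μ ∧ (∀ᵐ ω ∂μ, 0 ≤ Z ω) ∧ (∫ ω, Z ω ∂μ) = 1) ∧
          MemLp Z ⊤ μ ∧ g (((eLpNorm Z ⊤ μ)⁻¹).toReal) ≠ ⊤},
        ((((∫ ω, -(Z ω * X ω) ∂μ) : ℝ) : EReal) - g (((eLpNorm Z ⊤ μ)⁻¹).toReal)))
      = ⨆ Z ∈ {Z : Ω' → ℝ |
          (Integrable Z μ ∧ (∀ᵐ ω ∂μ, 0 ≤ Z ω) ∧ (∫ ω, Z ω ∂μ) = 1) ∧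
          MemLp Z ⊤ μ ∧ g (((eLpNorm Z ⊤ μ)⁻¹).toReal) ≠ ⊤},
        ((((∫ ω, -(Z ω * X' ω) ∂μ) : ℝ) : EReal) - g (((eLpNorm Z ⊤ μ)⁻¹).toReal)) := by
    apply iSup_congr; intro Z; apply iSup_congr; intro _
    have : (∫ ω, -(Z ω * X ω) ∂μ) = ∫ ω, -(Z ω * X' ω) ∂μ := by
      apply integral_congr_ae
      filter_upwards [hae] with ω h
      rw [h]
    rw [this]
  rw [hL, hR2]
  exact stmt15_meas μ g hg0 hganti hg1 X' hXm hXi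

end Aux

/-- dual representation of the `g`-adjusted Expected Shortfall
`ES^g(X) = sup_{α ∈ (0,1]} (ES^α(X) - g(α))` in terms of bounded densities `Z` with
penalty `g(‖Z‖_∞⁻¹)`. -/
theorem stmt15 {Ω : Type*} [MeasurableSpace Ω] (μ : Measure Ω) [IsProbabilityMeasure μ]
    (g : ℝ → EReal) (hg0 : ∀ x, 0 ≤ g x) (hganti : AntitoneOn g (Ioc 0 1))
    (hg1 : g 1 = 0) (hgdom : ∃ x ∈ Ioo (0:ℝ) 1, g x ≠ ⊤)
    (X : Ω → ℝ) (hX : Integrable X μ) :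
    (⨆ a ∈ Ioc (0:ℝ) 1, (((ES μ X a : ℝ) : EReal) - g a)) =
      ⨆ Z ∈ {Z : Ω → ℝ |
          (Integrable Z μ ∧ (∀ᵐ ω ∂μ, 0 ≤ Z ω) ∧ (∫ ω, Z ω ∂μ) = 1) ∧
          MemLp Z ⊤ μ ∧ g (((eLpNorm Z ⊤ μ)⁻¹).toReal) ≠ ⊤},
        ((((∫ ω, -(Z ω * X ω) ∂μ) : ℝ) : EReal) - g (((eLpNorm Z ⊤ μ)⁻¹).toReal)) :=
  stmt15_aemeas μ g hg0 hganti hg1 X hX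
end
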